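/- arXiv:0912.4742 — 4 statements merged into one kernel-verified Lean document; each statement's English description precedes it below -/
import Mathlib

section
/- Let W be an n×n invertible real matrix. If A minimizes Δ_A² · trace(W(AᵗA)⁻¹Wᵗ) over all full column rank strategies and A' minimizes ‖A‖₂² · trace(W(AᵗA)⁻¹Wᵗ) (where ‖A‖₂ is the maximum L2 column norm), then Δ_{A'}² · trace(W(A'ᵗA')⁻¹Wᵗ) ≤ n · Δ_A² · trace(W(AᵗA)⁻¹Wᵗ). -/
open Matrix

/-- The maximum L1 column norm (sensitivity) of `A`. -/
noncomputable def maxL1 {n : ℕ} (A : Matrix (Fin n) (Fin n) ℝ) : ℝ :=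
  ⨆ j : Fin n, ∑ i, |A i j|

/-- The maximum L2 column norm of `A`. -/
noncomputable def maxL2 {n : ℕ} (A : Matrix (Fin n) (Fin n) ℝ) : ℝ :=
  ⨆ j : Fin n, Real.sqrt (∑ i, (A i j) ^ 2)

lemma maxL1_nonneg {n : ℕ} (A : Matrix (Fin n) (Fin n) ℝ) : 0 ≤ maxL1 A :=
  Real.iSup_nonneg fun j => Finset.sum_nonneg fun i _ => abs_nonneg _

lemma maxL2_nonneg {n : ℕ} (A : Matrix (Fin n) (Fin n) ℝ) : 0 ≤ maxL2 A :=
  Real.iSup_nonneg fun j => Real.sqrt_nonneg _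

lemma maxL2_le_maxL1 {n : ℕ} (A : Matrix (Fin n) (Fin n) ℝ) : maxL2 A ≤ maxL1 A := by
  apply Real.iSup_le _ (maxL1_nonneg A)
  intro j
  have h1 : Real.sqrt (∑ i, (A i j) ^ 2) ≤ ∑ i, |A i j| := by
    rw [show (∑ i, (A i j) ^ 2) = ∑ i, |A i j| ^ 2 by simp [sq_abs]]
    have hle : ∑ i, |A i j| ^ 2 ≤ (∑ i, |A i j|) ^ 2 :=
      Finset.sum_sq_le_sq_sum_of_nonneg fun i _ => abs_nonneg _
    calc Real.sqrt (∑ i, |A i j| ^ 2) ≤ Real.sqrt ((∑ i, |A i j|) ^ 2) :=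
          Real.sqrt_le_sqrt hle
      _ = ∑ i, |A i j| := Real.sqrt_sq (Finset.sum_nonneg fun i _ => abs_nonneg _)
  exact h1.trans (le_ciSup (f := fun j => ∑ i, |A i j|)
    (Set.Finite.bddAbove (Set.finite_range _)) j)

lemma maxL1_sq_le {n : ℕ} (A : Matrix (Fin n) (Fin n) ℝ) :
    maxL1 A ^ 2 ≤ n * maxL2 A ^ 2 := by
  have h : maxL1 A ≤ Real.sqrt n * maxL2 A := by
    apply Real.iSup_le _ (mul_nonneg (Real.sqrt_nonneg _) (maxL2_nonneg A))
    intro j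
    have hcs : (∑ i, |A i j|) ^ 2 ≤ n * ∑ i, |A i j| ^ 2 := by
      simpa using sq_sum_le_card_mul_sum_sq (s := Finset.univ) (f := fun i => |A i j|)
    have h2 : ∑ i, |A i j| ≤ Real.sqrt (n * ∑ i, (A i j) ^ 2) := by
      rw [show (∑ i, (A i j) ^ 2) = ∑ i, |A i j| ^ 2 by simp [sq_abs]]
      have := Real.sqrt_le_sqrt hcs
      rwa [Real.sqrt_sq (Finset.sum_nonneg fun i _ => abs_nonneg _)] at this
    refine h2.trans ?_
    rw [Real.sqrt_mul (Nat.cast_nonneg n)]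
    exact mul_le_mul_of_nonneg_left
      (le_ciSup (f := fun j => Real.sqrt (∑ i, (A i j) ^ 2))
        (Set.Finite.bddAbove (Set.finite_range _)) j) (Real.sqrt_nonneg _)
  calc maxL1 A ^ 2 ≤ (Real.sqrt n * maxL2 A) ^ 2 :=
        pow_le_pow_left₀ (maxL1_nonneg A) h 2
    _ = n * maxL2 A ^ 2 := by
        rw [mul_pow, Real.sq_sqrt (Nat.cast_nonneg n)]

lemma trace_nonneg_aux {n : ℕ} (W A : Matrix (Fin n) (Fin n) ℝ) (hA : IsUnit A.det) :
    0 ≤ trace (W * (Aᵀ * A)⁻¹ * Wᵀ) := by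
  have h : W * (Aᵀ * A)⁻¹ * Wᵀ = (W * A⁻¹) * (W * A⁻¹)ᵀ := by
    rw [Matrix.mul_inv_rev, Matrix.transpose_mul, Matrix.transpose_nonsing_inv]
    simp [Matrix.mul_assoc]
  rw [h, Matrix.trace]
  apply Finset.sum_nonneg
  intro i _
  simp only [Matrix.diag_apply, Matrix.mul_apply, Matrix.transpose_apply]
  exact Finset.sum_nonneg fun j _ => mul_self_nonneg _

/-- If `A` minimizes the true total error `Δ_A²·trace(W(AᵗA)⁻¹Wᵗ)` and `A'` minimizes
the L2 approximation `‖A‖₂²·trace(W(AᵗA)⁻¹Wᵗ)`, then the total error of `A'` is at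
most `n` times that of `A`. -/
theorem l2_approximation_bound (n : ℕ) (W A A' : Matrix (Fin n) (Fin n) ℝ)
    (hW : IsUnit W.det) (hA : IsUnit A.det) (hA' : IsUnit A'.det)
    (hAopt : ∀ B : Matrix (Fin n) (Fin n) ℝ, IsUnit B.det →
      maxL1 A ^ 2 * trace (W * (Aᵀ * A)⁻¹ * Wᵀ)
        ≤ maxL1 B ^ 2 * trace (W * (Bᵀ * B)⁻¹ * Wᵀ))
    (hA'opt : ∀ B : Matrix (Fin n) (Fin n) ℝ, IsUnit B.det →
      maxL2 A' ^ 2 * trace (W * (A'ᵀ * A')⁻¹ * Wᵀ)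
        ≤ maxL2 B ^ 2 * trace (W * (Bᵀ * B)⁻¹ * Wᵀ)) :
    maxL1 A' ^ 2 * trace (W * (A'ᵀ * A')⁻¹ * Wᵀ)
      ≤ n * (maxL1 A ^ 2 * trace (W * (Aᵀ * A)⁻¹ * Wᵀ)) := by
  have hT' := trace_nonneg_aux W A' hA'
  have hT := trace_nonneg_aux W A hA
  calc maxL1 A' ^ 2 * trace (W * (A'ᵀ * A')⁻¹ * Wᵀ)
      ≤ (n * maxL2 A' ^ 2) * trace (W * (A'ᵀ * A')⁻¹ * Wᵀ) :=
        mul_le_mul_of_nonneg_right (maxL1_sq_le A') hT'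
    _ = n * (maxL2 A' ^ 2 * trace (W * (A'ᵀ * A')⁻¹ * Wᵀ)) := by ring
    _ ≤ n * (maxL2 A ^ 2 * trace (W * (Aᵀ * A)⁻¹ * Wᵀ)) :=
        mul_le_mul_of_nonneg_left (hA'opt A hA) (Nat.cast_nonneg n)
    _ ≤ n * (maxL1 A ^ 2 * trace (W * (Aᵀ * A)⁻¹ * Wᵀ)) := by
        apply mul_le_mul_of_nonneg_left _ (Nat.cast_nonneg n)
        exact mul_le_mul_of_nonneg_right
          (pow_le_pow_left₀ (maxL2_nonneg A) (maxL2_le_maxL1 A) 2) hT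
end

section
/- Let A be an invertible n×n matrix with singular value decomposition A = Q D Pᵗ and singular values δ₁,…,δₙ. Among all matrices B with BᵗB = AᵗA, the matrix B = D Pᵗ minimizes the radius of the smallest L1 ball containing the ellipsoid {x : xᵗ(BBᵗ)⁻¹x = 1}, and this minimal radius equals √(δ₁² + ⋯ + δₙ²). -/
open Matrix

/-- The radius of the smallest L1 ball containing the ellipsoid
`{x : xᵗ(BBᵗ)⁻¹x = 1}`: the maximum over sign vectors `a ∈ {±1}ⁿ` of `√(aᵗ(BBᵗ)a)`. -/
noncomputable def l1rad {n : ℕ} (B : Matrix (Fin n) (Fin n) ℝ) : ℝ :=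
  ⨆ s : Fin n → Bool,
    Real.sqrt ((fun i => if s i then (1 : ℝ) else -1) ⬝ᵥ
      ((B * Bᵀ) *ᵥ fun i => if s i then (1 : ℝ) else -1))

private def sgn {n : ℕ} (s : Fin n → Bool) : Fin n → ℝ := fun i => if s i then 1 else -1

private lemma sgn_sq {n : ℕ} (s : Fin n → Bool) (i : Fin n) : sgn s i * sgn s i = 1 := by
  unfold sgn; split <;> norm_num

private lemma sum_sgn_mul {n : ℕ} (i j : Fin n) (hij : i ≠ j) :
    ∑ s : Fin n → Bool, sgn s i * sgn s j = 0 := by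
  apply Finset.sum_ninvolution (fun s => Function.update s i (!s i))
  · intro s
    have h1 : sgn (Function.update s i (!s i)) i = - sgn s i := by
      simp only [sgn, Function.update_self]
      cases s i <;> simp
    have h2 : sgn (Function.update s i (!s i)) j = sgn s j := by
      simp [sgn, Function.update_of_ne (Ne.symm hij)]
    rw [h1, h2]; ring
  · intro s _ h
    have := congrFun h i
    simp [Function.update_self] at this
  · intro s; exact Finset.mem_univ _
  · intro s
    funext k
    by_cases hk : k = i
    · subst hk; simp
    · simp [Function.update_of_ne hk]

private lemma sum_sgn_mul_eq {n : ℕ} (i j : Fin n) :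
    ∑ s : Fin n → Bool, sgn s i * sgn s j = if i = j then (2 : ℝ) ^ n else 0 := by
  by_cases h : i = j
  · subst h
    simp [sgn_sq, Finset.card_univ]
  · simp [h, sum_sgn_mul i j h]

private lemma exists_sgn_ge_trace {n : ℕ} (M : Matrix (Fin n) (Fin n) ℝ) :
    ∃ s : Fin n → Bool, M.trace ≤ sgn s ⬝ᵥ (M *ᵥ sgn s) := by
  have hsum : ∑ s : Fin n → Bool, sgn s ⬝ᵥ (M *ᵥ sgn s) = (2 : ℝ) ^ n * M.trace := by
    have : ∀ s : Fin n → Bool, sgn s ⬝ᵥ (M *ᵥ sgn s)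
        = ∑ i, ∑ j, M i j * (sgn s i * sgn s j) := by
      intro s
      simp only [dotProduct, mulVec, Finset.mul_sum]
      exact Finset.sum_congr rfl fun i _ => Finset.sum_congr rfl fun j _ => by ring
    simp only [this]
    rw [Finset.sum_comm]
    have : ∀ i : Fin n, ∑ s : Fin n → Bool, ∑ j, M i j * (sgn s i * sgn s j)
        = (2 : ℝ) ^ n * M i i := by
      intro i
      rw [Finset.sum_comm]
      have : ∀ j : Fin n, ∑ s : Fin n → Bool, M i j * (sgn s i * sgn s j)
          = M i j * (if i = j then (2 : ℝ) ^ n else 0) := by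
        intro j
        rw [← Finset.mul_sum, sum_sgn_mul_eq]
      simp only [this]
      simp [Finset.sum_ite_eq, mul_comm]
    simp only [this]
    rw [← Finset.mul_sum, Matrix.trace]
    rfl
  have hne : (Finset.univ : Finset (Fin n → Bool)).Nonempty := Finset.univ_nonempty
  have hle : ∑ _s : Fin n → Bool, M.trace ≤ ∑ s : Fin n → Bool, sgn s ⬝ᵥ (M *ᵥ sgn s) := by
    rw [hsum, Finset.sum_const, Finset.card_univ]
    simp [nsmul_eq_mul]
  obtain ⟨s, _, hs⟩ := Finset.exists_le_of_sum_le hne hle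
  exact ⟨s, hs⟩

private lemma l1rad_diag {n : ℕ} (P : Matrix (Fin n) (Fin n) ℝ) (δ : Fin n → ℝ)
    (hP : Pᵀ * P = 1) :
    l1rad (diagonal δ * Pᵀ) = Real.sqrt (∑ i, δ i ^ 2) := by
  have hBB : (diagonal δ * Pᵀ) * (diagonal δ * Pᵀ)ᵀ = diagonal (fun i => δ i ^ 2) := by
    rw [Matrix.transpose_mul, Matrix.transpose_transpose, Matrix.diagonal_transpose]
    calc diagonal δ * Pᵀ * (P * diagonal δ)
        = diagonal δ * (Pᵀ * P) * diagonal δ := by rw [Matrix.mul_assoc, Matrix.mul_assoc,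
          Matrix.mul_assoc]
      _ = diagonal (fun i => δ i ^ 2) := by
          rw [hP, Matrix.mul_one, Matrix.diagonal_mul_diagonal]
          congr 1; funext i; ring_nf
  unfold l1rad
  rw [hBB]
  have : ∀ s : Fin n → Bool,
      (fun i => if s i then (1 : ℝ) else -1) ⬝ᵥ
        (diagonal (fun i => δ i ^ 2) *ᵥ fun i => if s i then (1 : ℝ) else -1)
      = ∑ i, δ i ^ 2 := by
    intro s
    simp only [dotProduct, mulVec_diagonal]
    exact Finset.sum_congr rfl fun i _ => by split <;> ring
  simp only [this]
  exact ciSup_const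

/-- Let `A = Q D Pᵗ` be an SVD of `A` with singular values `δᵢ > 0`. Among all matrices
`B` profile equivalent to `A` (i.e. `BᵗB = AᵗA`), the matrix `B = D Pᵗ` minimizes the
radius of the smallest L1 ball covering the ellipsoid `{x : xᵗ(BBᵗ)⁻¹x = 1}`, and this
minimal radius equals `√(δ₁² + ⋯ + δₙ²)`. -/
theorem svd_minimizes_l1_ball (n : ℕ) (A Q P : Matrix (Fin n) (Fin n) ℝ)
    (δ : Fin n → ℝ) (hδ : ∀ i, 0 < δ i)
    (hQ : Qᵀ * Q = 1) (hP : Pᵀ * P = 1)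
    (hA : A = Q * diagonal δ * Pᵀ) :
    ((diagonal δ * Pᵀ)ᵀ * (diagonal δ * Pᵀ) = Aᵀ * A) ∧
    (∀ B : Matrix (Fin n) (Fin n) ℝ, Bᵀ * B = Aᵀ * A →
      l1rad (diagonal δ * Pᵀ) ≤ l1rad B) ∧
    l1rad (diagonal δ * Pᵀ) = Real.sqrt (∑ i, δ i ^ 2) := by
  have hATA : Aᵀ * A = P * diagonal (fun i => δ i ^ 2) * Pᵀ := by
    subst hA
    have hδ2 : (fun i => δ i * δ i) = fun i => δ i ^ 2 := by funext i; ring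
    simp only [Matrix.transpose_mul, Matrix.diagonal_transpose, Matrix.transpose_transpose,
      Matrix.mul_assoc]
    rw [← Matrix.mul_assoc Qᵀ Q, hQ, Matrix.one_mul,
      ← Matrix.mul_assoc (diagonal δ), Matrix.diagonal_mul_diagonal, hδ2]
  have h1 : (diagonal δ * Pᵀ)ᵀ * (diagonal δ * Pᵀ) = Aᵀ * A := by
    have hδ2 : (fun i => δ i * δ i) = fun i => δ i ^ 2 := by funext i; ring
    rw [hATA, Matrix.transpose_mul, Matrix.transpose_transpose, Matrix.diagonal_transpose]
    rw [Matrix.mul_assoc, ← Matrix.mul_assoc (diagonal δ), Matrix.diagonal_mul_diagonal,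
      hδ2, ← Matrix.mul_assoc]
  have h3 := l1rad_diag P δ hP
  refine ⟨h1, ?_, h3⟩
  intro B hB
  have htr : (B * Bᵀ).trace = ∑ i, δ i ^ 2 := by
    rw [Matrix.trace_mul_comm, hB, hATA, Matrix.trace_mul_comm, ← Matrix.mul_assoc, hP,
      Matrix.one_mul, Matrix.trace_diagonal]
  obtain ⟨s, hs⟩ := exists_sgn_ge_trace (B * Bᵀ)
  rw [htr] at hs
  have hbdd : BddAbove (Set.range fun s : Fin n → Bool =>
      Real.sqrt ((fun i => if s i then (1 : ℝ) else -1) ⬝ᵥ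
        ((B * Bᵀ) *ᵥ fun i => if s i then (1 : ℝ) else -1))) :=
    Set.Finite.bddAbove (Set.finite_range _)
  rw [h3]
  calc Real.sqrt (∑ i, δ i ^ 2)
      ≤ Real.sqrt (sgn s ⬝ᵥ ((B * Bᵀ) *ᵥ sgn s)) := Real.sqrt_le_sqrt hs
    _ ≤ l1rad B := le_ciSup hbdd s
end

section
/- Let W be an n×n invertible matrix with singular values δ'₁,…,δ'ₙ. The minimum over all invertible n×n matrices A with singular values δ₁,…,δₙ of the quantity (δ₁²+⋯+δₙ²)·trace(W(AᵗA)⁻¹Wᵗ) equals (δ'₁ + δ'₂ + ⋯ + δ'ₙ)², and is achieved by A with the same right singular vectors as W and singular values δᵢ = √(δ'ᵢ). -/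
open Matrix

lemma aux_trace (n : ℕ) (Qw Pw Qa Pa : Matrix (Fin n) (Fin n) ℝ)
    (δ' δ : Fin n → ℝ) (hδ : ∀ i, δ i ≠ 0)
    (hQw : Qwᵀ * Qw = 1) (hPw : Pwᵀ * Pw = 1)
    (hQa : Qaᵀ * Qa = 1) (hPa : Paᵀ * Pa = 1) :
    trace ((Qw * diagonal δ' * Pwᵀ) * (((Qa * diagonal δ * Paᵀ)ᵀ * (Qa * diagonal δ * Paᵀ))⁻¹) *
        (Qw * diagonal δ' * Pwᵀ)ᵀ)
      = ∑ i, δ' i ^ 2 * ∑ j, (Pwᵀ * Pa) i j ^ 2 * (δ j ^ 2)⁻¹ := by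
  have hPa' : Pa * Paᵀ = 1 := mul_eq_one_comm.mp hPa
  have hAtA : (Qa * diagonal δ * Paᵀ)ᵀ * (Qa * diagonal δ * Paᵀ)
      = Pa * diagonal (fun i => δ i ^ 2) * Paᵀ := by
    have h1 : Qaᵀ * (Qa * (diagonal δ * Paᵀ)) = diagonal δ * Paᵀ := by
      rw [← Matrix.mul_assoc, hQa, Matrix.one_mul]
    simp only [transpose_mul, transpose_transpose, diagonal_transpose, Matrix.mul_assoc, h1,
      ← Matrix.mul_assoc]
    rw [Matrix.mul_assoc (Pa * diagonal δ) Qaᵀ Qa, hQa, Matrix.mul_one, Matrix.mul_assoc Pa,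
      diagonal_mul_diagonal]
    have h2 : (fun i => δ i * δ i) = fun i => δ i ^ 2 := by funext i; ring
    rw [h2]
  have hinv : ((Qa * diagonal δ * Paᵀ)ᵀ * (Qa * diagonal δ * Paᵀ))⁻¹
      = Pa * diagonal (fun i => (δ i ^ 2)⁻¹) * Paᵀ := by
    rw [hAtA]
    apply inv_eq_right_inv
    calc Pa * diagonal (fun i => δ i ^ 2) * Paᵀ * (Pa * diagonal (fun i => (δ i ^ 2)⁻¹) * Paᵀ)
        = Pa * diagonal (fun i => δ i ^ 2) * (Paᵀ * Pa) * (diagonal (fun i => (δ i ^ 2)⁻¹) * Paᵀ) := by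
          simp only [Matrix.mul_assoc]
      _ = Pa * (diagonal (fun i => δ i ^ 2) * diagonal (fun i => (δ i ^ 2)⁻¹)) * Paᵀ := by
          rw [hPa, Matrix.mul_one]; simp only [Matrix.mul_assoc]
      _ = 1 := by
          rw [diagonal_mul_diagonal]
          have : (fun i => δ i ^ 2 * (δ i ^ 2)⁻¹) = fun _ => (1:ℝ) := by
            funext i; exact mul_inv_cancel₀ (pow_ne_zero 2 (hδ i))
          rw [this, diagonal_one, Matrix.mul_one, hPa']
  rw [hinv]
  set M := Pwᵀ * Pa with hM
  have hexp : (Qw * diagonal δ' * Pwᵀ) * (Pa * diagonal (fun i => (δ i ^ 2)⁻¹) * Paᵀ) *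
      (Qw * diagonal δ' * Pwᵀ)ᵀ
      = Qw * (diagonal δ' * M * diagonal (fun i => (δ i ^ 2)⁻¹) * Mᵀ * diagonal δ') * Qwᵀ := by
    simp only [transpose_mul, transpose_transpose, diagonal_transpose, hM, Matrix.mul_assoc]
  rw [hexp, trace_mul_cycle, ← Matrix.mul_assoc, hQw, Matrix.one_mul]
  simp only [trace, diag_apply, Matrix.mul_apply, diagonal_apply, transpose_apply,
    mul_ite, ite_mul, mul_zero, zero_mul, Finset.sum_ite_eq, Finset.sum_ite_eq',
    Finset.mem_univ, if_true, Finset.sum_mul, Finset.mul_sum]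
  refine Finset.sum_congr rfl fun i _ => ?_
  refine Finset.sum_congr rfl fun j _ => ?_
  ring

lemma aux_cs (n : ℕ) (M : Matrix (Fin n) (Fin n) ℝ) (δ δ' : Fin n → ℝ)
    (hδ : ∀ i, δ i ≠ 0)
    (h1 : ∀ j, ∑ i, M i j ^ 2 = 1) (h2 : ∀ i, ∑ j, M i j ^ 2 = 1) :
    (∑ i, δ' i) ^ 2 ≤ (∑ j, δ j ^ 2) * ∑ i, δ' i ^ 2 * ∑ j, M i j ^ 2 * (δ j ^ 2)⁻¹ := by
  set f : Fin n × Fin n → ℝ := fun p => δ p.2 * M p.1 p.2 with hf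
  set g : Fin n × Fin n → ℝ := fun p => δ' p.1 * M p.1 p.2 / δ p.2 with hg
  have hfg : ∑ p : Fin n × Fin n, f p * g p = ∑ i, δ' i := by
    rw [Fintype.sum_prod_type]
    calc ∑ a, ∑ b, f (a, b) * g (a, b) = ∑ a, δ' a * ∑ b, M a b ^ 2 := by
          refine Finset.sum_congr rfl fun a _ => ?_
          rw [Finset.mul_sum]
          refine Finset.sum_congr rfl fun b _ => ?_
          simp only [hf, hg]
          have hc : δ' a * M a b / δ b * δ b = δ' a * M a b := div_mul_cancel₀ _ (hδ b)
          calc δ b * M a b * (δ' a * M a b / δ b)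
              = δ' a * M a b / δ b * δ b * M a b := by ring
            _ = δ' a * M a b ^ 2 := by rw [hc]; ring
      _ = ∑ a, δ' a := by simp [h2]
  have hf2 : ∑ p : Fin n × Fin n, f p ^ 2 = ∑ j, δ j ^ 2 := by
    rw [Fintype.sum_prod_type_right]
    calc ∑ b, ∑ a, f (a, b) ^ 2 = ∑ b, δ b ^ 2 * ∑ a, M a b ^ 2 := by
          refine Finset.sum_congr rfl fun b _ => ?_
          rw [Finset.mul_sum]
          refine Finset.sum_congr rfl fun a _ => ?_
          simp only [hf]; ring
      _ = ∑ b, δ b ^ 2 := by simp [h1]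
  have hg2 : ∑ p : Fin n × Fin n, g p ^ 2
      = ∑ i, δ' i ^ 2 * ∑ j, M i j ^ 2 * (δ j ^ 2)⁻¹ := by
    rw [Fintype.sum_prod_type]
    refine Finset.sum_congr rfl fun a _ => ?_
    rw [Finset.mul_sum]
    refine Finset.sum_congr rfl fun b _ => ?_
    simp only [hg, div_pow, div_eq_mul_inv, mul_pow]
    ring
  calc (∑ i, δ' i) ^ 2 = (∑ p : Fin n × Fin n, f p * g p) ^ 2 := by rw [hfg]
    _ ≤ (∑ p : Fin n × Fin n, f p ^ 2) * ∑ p : Fin n × Fin n, g p ^ 2 :=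
        Finset.sum_mul_sq_le_sq_mul_sq _ _ _
    _ = _ := by rw [hf2, hg2]

/-- Let `W = Q_W D_W P_Wᵗ` with singular values `δ'ᵢ > 0`. The minimum over all
invertible strategies `A` (with SVD `Q_A diag(δ) P_Aᵗ`, `δᵢ > 0`) of the singular value
bound objective `(δ₁²+⋯+δₙ²)·trace(W(AᵗA)⁻¹Wᵗ)` equals `(δ'₁+⋯+δ'ₙ)²`, and it is
achieved by the strategy `diag(√δ'₁,…,√δ'ₙ) P_Wᵗ`. -/
theorem singular_value_bound_optimum (n : ℕ) (W Qw Pw : Matrix (Fin n) (Fin n) ℝ)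
    (δ' : Fin n → ℝ) (hδ' : ∀ i, 0 < δ' i)
    (hQw : Qwᵀ * Qw = 1) (hPw : Pwᵀ * Pw = 1)
    (hW : W = Qw * diagonal δ' * Pwᵀ) :
    IsLeast {r : ℝ | ∃ (A Qa Pa : Matrix (Fin n) (Fin n) ℝ) (δ : Fin n → ℝ),
        Qaᵀ * Qa = 1 ∧ Paᵀ * Pa = 1 ∧ (∀ i, 0 < δ i) ∧
        A = Qa * diagonal δ * Paᵀ ∧
        r = (∑ i, δ i ^ 2) * trace (W * (Aᵀ * A)⁻¹ * Wᵀ)}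
      ((∑ i, δ' i) ^ 2) ∧
    (∑ i, Real.sqrt (δ' i) ^ 2) *
      trace (W * (((diagonal (fun i => Real.sqrt (δ' i)) * Pwᵀ)ᵀ *
        (diagonal (fun i => Real.sqrt (δ' i)) * Pwᵀ))⁻¹) * Wᵀ)
      = (∑ i, δ' i) ^ 2 := by
  have hsq : ∀ i, Real.sqrt (δ' i) ^ 2 = δ' i := fun i => Real.sq_sqrt (hδ' i).le
  have hsne : ∀ i, Real.sqrt (δ' i) ≠ 0 := fun i => (Real.sqrt_pos.mpr (hδ' i)).ne'
  have htr0 : trace (W * (((diagonal (fun i => Real.sqrt (δ' i)) * Pwᵀ)ᵀ *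
        (diagonal (fun i => Real.sqrt (δ' i)) * Pwᵀ))⁻¹) * Wᵀ) = ∑ i, δ' i := by
    have hA0 : diagonal (fun i => Real.sqrt (δ' i)) * Pwᵀ
        = (1 : Matrix (Fin n) (Fin n) ℝ) * diagonal (fun i => Real.sqrt (δ' i)) * Pwᵀ := by
      rw [Matrix.one_mul]
    rw [hW, hA0, aux_trace n Qw Pw 1 Pw δ' (fun i => Real.sqrt (δ' i)) hsne hQw hPw
      (by simp) hPw, hPw]
    refine Finset.sum_congr rfl fun i _ => ?_
    simp only [Matrix.one_apply, hsq]
    rw [Finset.sum_congr rfl (g := fun j => if i = j then (δ' j)⁻¹ else 0)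
      (fun j _ => by by_cases h : i = j <;> simp [h])]
    rw [Finset.sum_ite_eq, if_pos (Finset.mem_univ i), sq]
    field_simp
  have hach : (∑ i, Real.sqrt (δ' i) ^ 2) *
      trace (W * (((diagonal (fun i => Real.sqrt (δ' i)) * Pwᵀ)ᵀ *
        (diagonal (fun i => Real.sqrt (δ' i)) * Pwᵀ))⁻¹) * Wᵀ)
      = (∑ i, δ' i) ^ 2 := by
    rw [htr0]
    simp only [hsq]
    ring
  refine ⟨⟨⟨diagonal (fun i => Real.sqrt (δ' i)) * Pwᵀ, 1, Pw, fun i => Real.sqrt (δ' i),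
    by simp, hPw, fun i => Real.sqrt_pos.mpr (hδ' i), by rw [Matrix.one_mul], hach.symm⟩, ?_⟩, hach⟩
  rintro r ⟨A, Qa, Pa, δ, hQa, hPa, hδ, hA, rfl⟩
  have hδne : ∀ i, δ i ≠ 0 := fun i => (hδ i).ne'
  have hPw' : Pw * Pwᵀ = 1 := mul_eq_one_comm.mp hPw
  have hMtM : (Pwᵀ * Pa)ᵀ * (Pwᵀ * Pa) = 1 := by
    rw [transpose_mul, transpose_transpose, Matrix.mul_assoc, ← Matrix.mul_assoc Pw, hPw',
      Matrix.one_mul, hPa]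
  have hMMt : (Pwᵀ * Pa) * (Pwᵀ * Pa)ᵀ = 1 := mul_eq_one_comm.mp hMtM
  have h1 : ∀ j, ∑ i, (Pwᵀ * Pa) i j ^ 2 = 1 := by
    intro j
    have := congrFun (congrFun hMtM j) j
    simpa [Matrix.mul_apply, Matrix.one_apply, sq, mul_comm] using this
  have h2 : ∀ i, ∑ j, (Pwᵀ * Pa) i j ^ 2 = 1 := by
    intro i
    have := congrFun (congrFun hMMt i) i
    simpa [Matrix.mul_apply, Matrix.one_apply, sq, mul_comm] using this
  rw [hW, hA, aux_trace n Qw Pw Qa Pa δ' δ hδne hQw hPw hQa hPa]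
  exact aux_cs n (Pwᵀ * Pa) δ δ' hδne h1 h2
end

section
/- For n = 2ᵏ, the unnormalized Haar wavelet matrix Yₙ satisfies YₙᵗYₙ = block-diag(𝟙_{(n/2)×(n/2)}, 𝟙_{(n/2)×(n/2)}) + block-diag(Y_{n/2}ᵗY_{n/2}, Y_{n/2}ᵗY_{n/2}); consequently every eigenvalue of YₙᵗYₙ is a power of 2, with eigenvalue 2ʲ having multiplicity 2^{k−j} for 1 ≤ j ≤ k−1 and eigenvalue 2ᵏ having multiplicity 2. -/
open Matrix Polynomial

/-- The column (domain) index type for domain size `2^k`. -/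
def YCol : ℕ → Type := fun k => Nat.rec (Fin 1) (fun _ T => T ⊕ T) k

/-- The index type of the difference (wavelet detail) rows over `2^k` leaves:
`2^k - 1` rows. -/
def DRow : ℕ → Type := fun k => Nat.rec Empty (fun _ T => Unit ⊕ (T ⊕ T)) k

instance yColFintype : ∀ k, Fintype (YCol k)
  | 0 => inferInstanceAs (Fintype (Fin 1))
  | (k + 1) => letI := yColFintype k; inferInstanceAs (Fintype (YCol k ⊕ YCol k))

instance yColDecEq : ∀ k, DecidableEq (YCol k)
  | 0 => inferInstanceAs (DecidableEq (Fin 1))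
  | (k + 1) => letI := yColDecEq k; inferInstanceAs (DecidableEq (YCol k ⊕ YCol k))

instance dRowFintype : ∀ k, Fintype (DRow k)
  | 0 => inferInstanceAs (Fintype Empty)
  | (k + 1) => letI := dRowFintype k; inferInstanceAs (Fintype (Unit ⊕ (DRow k ⊕ DRow k)))

/-- The difference rows of the Haar wavelet matrix: at each node of the binary tree,
a row with `+1` on the left subtree and `-1` on the right subtree. -/
noncomputable def Dmat : ∀ k, Matrix (DRow k) (YCol k) ℝ
  | 0 => Matrix.of fun e _ => e.elim
  | (k + 1) =>
      Matrix.fromRows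
        (Matrix.of fun (_ : Unit) (c : YCol k ⊕ YCol k) =>
          Sum.elim (fun _ => (1 : ℝ)) (fun _ => (-1 : ℝ)) c)
        (Matrix.fromBlocks (Dmat k) 0 0 (Dmat k))

/-- The (unnormalized) Haar wavelet matrix over `2^k` leaves: the all-ones row followed
by the difference rows. -/
noncomputable def Ymat (k : ℕ) : Matrix (Unit ⊕ DRow k) (YCol k) ℝ :=
  Matrix.fromRows (Matrix.of fun (_ : Unit) (_ : YCol k) => (1 : ℝ)) (Dmat k)

/-!
The Gram identity comes from splitting `Yₙ` into its all-ones row, its sign row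
`(1, …, 1, -1, …, -1)` and the two copies of `D_{n/2}`: the first two rows contribute
`𝟙 + sᵀs`, which is twice the block diagonal of all-ones matrices.

For the spectrum, the rows of `Yₙ` are pairwise orthogonal, since every detail row sums to zero
and rows of disjoint subtrees have disjoint supports. The all-ones row has squared norm `2ᵏ`, and
the detail row of a node of height `j` has squared norm `2ʲ`; there are `2^(k-j)` such nodes.
So `Yₙ Yₙᵗ` is diagonal with these entries, and as `Yₙ` is square, `YₙᵗYₙ` has the same
characteristic polynomial.
-/

instance dRowDecEq : ∀ k, DecidableEq (DRow k)
  | 0 => inferInstanceAs (DecidableEq Empty)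
  | k + 1 => letI := dRowDecEq k; inferInstanceAs (DecidableEq (Unit ⊕ (DRow k ⊕ DRow k)))

lemma card_YCol : ∀ k, Fintype.card (YCol k) = 2 ^ k
  | 0 => rfl
  | k + 1 => by
      rw [show Fintype.card (YCol (k + 1)) = Fintype.card (YCol k ⊕ YCol k) from rfl,
        Fintype.card_sum, card_YCol k, pow_succ, mul_two]

lemma card_unit_sum_DRow : ∀ k, Fintype.card (Unit ⊕ DRow k) = 2 ^ k
  | 0 => rfl
  | k + 1 => by
      have ih := card_unit_sum_DRow k
      rw [Fintype.card_sum] at ih ⊢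
      rw [show Fintype.card (DRow (k + 1)) = Fintype.card (Unit ⊕ (DRow k ⊕ DRow k)) from rfl,
        Fintype.card_sum, Fintype.card_sum, pow_succ]
      omega

lemma Matrix.mul_transpose_eq_zero_comm {R l m n : Type*} [CommSemiring R] [Fintype n]
    {A : Matrix m n R} {B : Matrix l n R} (h : A * Bᵀ = 0) : B * Aᵀ = 0 := by
  simpa using congrArg transpose h

lemma Matrix.charpoly_mul_comm_of_card_eq {R m n : Type*} [CommRing R] [Fintype m] [Fintype n]
    [DecidableEq m] [DecidableEq n] (A : Matrix m n R) (B : Matrix n m R)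
    (h : Fintype.card m = Fintype.card n) : (A * B).charpoly = (B * A).charpoly := by
  simpa [h] using charpoly_mul_comm_of_le A B h.ge

def signRow (k : ℕ) : Matrix Unit (YCol k ⊕ YCol k) ℝ :=
  of fun _ c => Sum.elim (fun _ => 1) (fun _ => -1) c

lemma sum_Dmat_row : ∀ k (r : DRow k), ∑ c, Dmat k r c = 0
  | 0 => fun r => r.elim
  | k + 1 => by
      rintro (⟨⟩ | (r : DRow k) | (r : DRow k))
      · show ∑ c, signRow k () c = 0
        simp [signRow, Fintype.sum_sum_type]
      · show ∑ c, fromBlocks (Dmat k) 0 0 (Dmat k) (.inl r) c = 0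
        simp [Fintype.sum_sum_type, sum_Dmat_row k r]
      · show ∑ c, fromBlocks (Dmat k) 0 0 (Dmat k) (.inr r) c = 0
        simp [Fintype.sum_sum_type, sum_Dmat_row k r]

lemma Ymat_transpose_mul_self (k : ℕ) :
    (Ymat k)ᵀ * Ymat k = of (fun _ _ => 1) + (Dmat k)ᵀ * Dmat k := by
  rw [Ymat, transpose_fromRows, fromCols_mul_fromRows]
  congr 1
  ext
  simp [mul_apply]

lemma Dmat_succ_transpose_mul_self (k : ℕ) :
    (Dmat (k + 1))ᵀ * Dmat (k + 1) = (signRow k)ᵀ * signRow k +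
      fromBlocks ((Dmat k)ᵀ * Dmat k) 0 0 ((Dmat k)ᵀ * Dmat k) := by
  show (fromRows (signRow k) (fromBlocks (Dmat k) 0 0 (Dmat k)))ᵀ *
      fromRows (signRow k) (fromBlocks (Dmat k) 0 0 (Dmat k)) = _
  rw [transpose_fromRows, fromCols_mul_fromRows, fromBlocks_transpose, fromBlocks_multiply]
  simp

lemma ones_add_signRow_transpose_mul (k : ℕ) :
    of (fun _ _ => 1) + (signRow k)ᵀ * signRow k =
      fromBlocks (of fun _ _ => 1) 0 0 (of fun _ _ => 1) +
        fromBlocks (of fun _ _ => 1) 0 0 (of fun _ _ => 1) := by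
  ext (i | i) (j | j) <;> norm_num [signRow, mul_apply]

/-- The row of `Dmat k` at a node of height `h` has `2^h` entries `±1`. -/
noncomputable def dRowNormSq : ∀ k, DRow k → ℝ
  | 0 => fun e => e.elim
  | k + 1 => Sum.elim (fun _ => 2 ^ (k + 1)) (Sum.elim (dRowNormSq k) (dRowNormSq k))

lemma signRow_mul_transpose (k : ℕ) :
    signRow k * (signRow k)ᵀ = diagonal fun _ => 2 ^ (k + 1) := by
  ext ⟨⟩ ⟨⟩
  simp [signRow, mul_apply, Fintype.sum_sum_type, card_YCol, pow_succ, mul_two]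

lemma signRow_mul_transpose_fromBlocks (k : ℕ) :
    signRow k * (fromBlocks (Dmat k) 0 0 (Dmat k))ᵀ = 0 := by
  ext ⟨⟩ (r | r) <;>
    simp [signRow, mul_apply, Fintype.sum_sum_type, Finset.sum_neg_distrib, sum_Dmat_row k r]

lemma Dmat_mul_transpose : ∀ k, Dmat k * (Dmat k)ᵀ = diagonal (dRowNormSq k)
  | 0 => by ext r; exact r.elim
  | k + 1 => by
      show fromRows (signRow k) (fromBlocks (Dmat k) 0 0 (Dmat k)) *
          (fromRows (signRow k) (fromBlocks (Dmat k) 0 0 (Dmat k)))ᵀ =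
        diagonal (Sum.elim (fun _ => 2 ^ (k + 1)) (Sum.elim (dRowNormSq k) (dRowNormSq k)))
      have hsM := signRow_mul_transpose_fromBlocks k
      rw [transpose_fromRows, fromRows_mul_fromCols, signRow_mul_transpose, hsM,
        mul_transpose_eq_zero_comm hsM, fromBlocks_transpose, fromBlocks_multiply]
      simp [Dmat_mul_transpose k, fromBlocks_diagonal]

lemma ones_mul_transpose_Dmat (k : ℕ) :
    (of fun (_ : Unit) (_ : YCol k) => (1 : ℝ)) * (Dmat k)ᵀ = 0 := by
  ext ⟨⟩ r
  simp [mul_apply, sum_Dmat_row k r]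

lemma Ymat_mul_transpose (k : ℕ) :
    Ymat k * (Ymat k)ᵀ = diagonal (Sum.elim (fun _ => 2 ^ k) (dRowNormSq k)) := by
  have hoo : (of fun (_ : Unit) (_ : YCol k) => (1 : ℝ)) *
      (of fun (_ : Unit) (_ : YCol k) => (1 : ℝ))ᵀ = diagonal fun _ => 2 ^ k := by
    ext ⟨⟩ ⟨⟩
    simp [mul_apply, card_YCol]
  rw [Ymat, transpose_fromRows, fromRows_mul_fromCols, hoo, ones_mul_transpose_Dmat,
    mul_transpose_eq_zero_comm (ones_mul_transpose_Dmat k),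
    Dmat_mul_transpose, fromBlocks_diagonal]

lemma charpoly_Ymat_transpose_mul_self (k : ℕ) :
    ((Ymat k)ᵀ * Ymat k).charpoly = (X - C (2 ^ k)) * ∏ r, (X - C (dRowNormSq k r)) := by
  rw [← charpoly_mul_comm_of_card_eq _ _ (by rw [card_YCol, card_unit_sum_DRow]),
    Ymat_mul_transpose, charpoly_diagonal, Fintype.prod_sum_type]
  simp

lemma prod_X_sub_C_dRowNormSq : ∀ k, ∏ r, (X - C (dRowNormSq k r))
    = ∏ j ∈ Finset.Ico 1 (k + 1), (X - C ((2 : ℝ) ^ j)) ^ 2 ^ (k - j)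
  | 0 => by
      show ∏ r : Empty, (X - C (dRowNormSq 0 r)) = _
      simp
  | k + 1 => by
      show ∏ r : Unit ⊕ (DRow k ⊕ DRow k),
          (X - C (Sum.elim (fun _ => 2 ^ (k + 1)) (Sum.elim (dRowNormSq k) (dRowNormSq k)) r)) = _
      have hsq : ∏ j ∈ Finset.Ico 1 (k + 1), (X - C ((2 : ℝ) ^ j)) ^ 2 ^ (k + 1 - j)
          = (∏ j ∈ Finset.Ico 1 (k + 1), (X - C ((2 : ℝ) ^ j)) ^ 2 ^ (k - j)) ^ 2 := by
        rw [← Finset.prod_pow]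
        refine Finset.prod_congr rfl fun j hj => ?_
        rw [← pow_mul, ← pow_succ]
        have := (Finset.mem_Ico.mp hj).2
        congr 2
        omega
      simp only [Fintype.prod_sum_type, Sum.elim_inl, Sum.elim_inr]
      rw [prod_X_sub_C_dRowNormSq k,
        Finset.prod_Ico_succ_top (b := k + 1) (by omega), hsq]
      simp [sq, mul_comm]

/-- For `n = 2^(k+1)`, `YₙᵗYₙ` is the block diagonal of two all-ones `(n/2)×(n/2)`
matrices plus the block diagonal of two copies of `Y_{n/2}ᵗY_{n/2}`; consequently, the
characteristic polynomial of `YₙᵗYₙ` (`n = 2^k`, `k ≥ 1`) is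
`(X - 2^k)² ∏_{j=1}^{k-1} (X - 2^j)^(2^(k-j))`: every eigenvalue is a power of two, with
eigenvalue `2^j` of multiplicity `2^(k-j)` for `1 ≤ j ≤ k-1` and `2^k` of multiplicity 2. -/
theorem wavelet_gram_and_charpoly (k : ℕ) :
    ((Ymat (k + 1))ᵀ * Ymat (k + 1)
        = Matrix.fromBlocks (Matrix.of fun (_ _ : YCol k) => (1 : ℝ)) 0 0
            (Matrix.of fun (_ _ : YCol k) => (1 : ℝ))
          + Matrix.fromBlocks ((Ymat k)ᵀ * Ymat k) 0 0 ((Ymat k)ᵀ * Ymat k)) ∧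
    (1 ≤ k →
      ((Ymat k)ᵀ * Ymat k).charpoly
        = (X - C ((2 : ℝ) ^ k)) ^ 2 *
            ∏ j ∈ Finset.Ico 1 k, (X - C ((2 : ℝ) ^ j)) ^ (2 ^ (k - j))) := by
  refine ⟨?_, fun hk => ?_⟩
  · rw [Ymat_transpose_mul_self, Dmat_succ_transpose_mul_self]
    -- `YCol (k + 1)` is `YCol k ⊕ YCol k` only up to unfolding; retype the sum to rewrite in it.
    show (of fun _ _ => 1 : Matrix (YCol k ⊕ YCol k) (YCol k ⊕ YCol k) ℝ) + _ = _
    rw [← add_assoc, ones_add_signRow_transpose_mul, add_assoc, fromBlocks_add,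
      Ymat_transpose_mul_self, add_zero]
  · rw [charpoly_Ymat_transpose_mul_self, prod_X_sub_C_dRowNormSq,
      Finset.prod_Ico_succ_top hk, Nat.sub_self, pow_zero, pow_one]
    ring
end
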